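/- Let F_q be a finite field. For each pair (n_1, n_2) of integers with 2 ≤ n_1, n_2 ≤ q there exists an optimal (r,δ)-LRC over F_q of length n = n_1n_2 with dimension k, minimum distance d and locality (r,δ) as follows: (1) k = (i+1)(j+1) and d = (n_1−i)(n_2−j), where either i = 0 and 0 ≤ j ≤ n_2−1 with (r,δ) = (1, n_1), or 1 ≤ i ≤ n_1−2 and j = n_2−1 with (r,δ) = (i+1, n_1−i); (2) k = (i+1)(n_2−1)+s+1, d = n_1−s and (r,δ) = (i+1, n_1−i), where max{0, 2i−n_1} ≤ s < i ≤ n_1−2; (3) k = (i+1)j+1, d = n_1(n_2−j) and (r,δ) = (i+1, n_1−i), where 1 ≤ i ≤ n_1−2, 1 ≤ j ≤ n_2−2 and i(n_2−j+1) ≤ n_1. -/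

import Mathlib

/-!
The codes are evaluation codes, on a grid `A × B ⊆ F²` with `#A = n₁` and `#B = n₂`, of the
polynomials `∑_{b ≤ t} g_b(X) Y^b` with `deg g_b ≤ i` for `b < t` and `deg g_t ≤ s`.
If `g_b` is the top nonzero coefficient, it is nonzero at `≥ n₁ - deg g_b` points `x ∈ A`, and
for each such `x` the restriction to `{x} × B` is a nonzero polynomial of degree `b` in `Y`;
hence every nonzero codeword has weight `≥ (n₁ - deg g_b)(n₂ - b)`. This makes evaluation
injective (so `k = (i + 1) t + s + 1`), and when the rows `b < t` do not lower the bound it gives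
`d = (n₁ - s)(n₂ - t)`, attained by `∏_{u < s} (X - a_u) · ∏_{v < t} (Y - b_v)`. Each column
`A × {y}` carries a Reed–Solomon code of degree `≤ i`, which is `(i + 1, n₁ - i)`-locality.
The Singleton-like bound is tight exactly when `s = 0` or `t = n₂ - 1`, and the four families
are such choices.
-/

/-- The code `C ⊆ F^ι` has minimum Hamming distance exactly `d`. -/
def HasMinDist {F ι : Type*} [Field F] [DecidableEq F] [Fintype ι]
    (C : Submodule F (ι → F)) (d : ℕ) : Prop :=
  (∀ c ∈ C, c ≠ 0 → d ≤ hammingNorm c) ∧ ∃ c ∈ C, c ≠ 0 ∧ hammingNorm c = d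

/-- The code `C ⊆ F^ι` is an `(r, δ)`-locally recoverable code: every coordinate `i` lies in a
set `R̄` of at most `r + δ - 1` coordinates such that the punctured code `C[R̄]` has minimum
Hamming distance at least `δ`. -/
def IsLRC {F ι : Type*} [Field F] [DecidableEq F] [DecidableEq ι] [Fintype ι]
    (C : Submodule F (ι → F)) (r δ : ℕ) : Prop :=
  ∀ i : ι, ∃ R : Finset ι, i ∈ R ∧ R.card ≤ r + δ - 1 ∧
    ∀ c ∈ C, (∃ j ∈ R, c j ≠ 0) → δ ≤ (R.filter fun j => c j ≠ 0).card

/-- There exists a linear code over `F` of length `n`, dimension `k` and minimum distance `d`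
which is an optimal `(r, δ)`-LRC, i.e. attaining the Singleton-like bound
`k + d + (⌈k/r⌉ - 1)(δ - 1) = n + 1`. -/
def IsOptimalLRCParams (F : Type*) [Field F] [DecidableEq F] (n k d r δ : ℕ) : Prop :=
  ∃ C : Submodule F (Fin n → F),
    Module.finrank F C = k ∧ HasMinDist C d ∧ IsLRC C r δ ∧
      k + d + ((k + r - 1) / r - 1) * (δ - 1) = n + 1

open Finset Polynomial

namespace Polynomial

variable {R ι κ : Type*} [CommRing R] [IsDomain R]

theorem eval_prod_X_sub_C_ne_zero_iff {α : ι → R} (hα : Function.Injective α) (U : Finset ι)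
    (x : ι) : (∏ u ∈ U, (X - C (α u))).eval (α x) ≠ 0 ↔ x ∉ U := by
  simp [eval_prod, prod_ne_zero_iff, sub_ne_zero, hα.ne_iff]

variable [DecidableEq R] [Fintype ι] [Fintype κ]

theorem card_sub_natDegree_le_card_eval_ne_zero {α : ι → R} (hα : Function.Injective α)
    {p : R[X]} (hp : p ≠ 0) : Fintype.card ι - p.natDegree ≤ #{x | p.eval (α x) ≠ 0} := by
  have hroots : #{x | p.eval (α x) = 0} ≤ p.natDegree := by
    rw [← card_image_of_injective _ hα]
    refine card_le_degree_of_subset_roots fun y hy => ?_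
    obtain ⟨x, hx, rfl⟩ := mem_image.mp hy
    exact (mem_roots hp).mpr (mem_filter.mp hx).2
  have := card_filter_add_card_filter_not (s := univ) fun x => p.eval (α x) = 0
  rw [card_univ] at this
  simp only [ne_eq]
  omega

theorem card_mul_le_card_evalEval_ne_zero {α : ι → R} {β : κ → R} (hα : Function.Injective α)
    (hβ : Function.Injective β) {P : R[X][X]} (hP : P ≠ 0) :
    (Fintype.card ι - P.leadingCoeff.natDegree) * (Fintype.card κ - P.natDegree) ≤
      #{q : ι × κ | P.evalEval (α q.1) (β q.2) ≠ 0} := by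
  set S : Finset ι := {x | P.leadingCoeff.eval (α x) ≠ 0}
  have hcol : ∀ x ∈ S, Fintype.card κ - P.natDegree ≤ #{y | P.evalEval (α x) (β y) ≠ 0} := by
    intro x hx
    have hlc : evalRingHom (α x) P.leadingCoeff ≠ 0 := (mem_filter.mp hx).2
    have hdeg := natDegree_map_of_leadingCoeff_ne_zero _ hlc
    have hne : P.map (evalRingHom (α x)) ≠ 0 := fun h => hlc <| by
      rw [← coeff_natDegree, ← coeff_map, h, coeff_zero]
    simpa [hdeg, map_evalRingHom_eval] using card_sub_natDegree_le_card_eval_ne_zero hβ hne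
  calc (Fintype.card ι - P.leadingCoeff.natDegree) * (Fintype.card κ - P.natDegree)
      ≤ #S * (Fintype.card κ - P.natDegree) :=
        Nat.mul_le_mul_right _ (card_sub_natDegree_le_card_eval_ne_zero hα (by simpa using hP))
    _ = ∑ x ∈ S, (Fintype.card κ - P.natDegree) := by rw [sum_const, smul_eq_mul]
    _ ≤ ∑ x ∈ S, #{y | P.evalEval (α x) (β y) ≠ 0} := sum_le_sum hcol
    _ ≤ ∑ x, #{y | P.evalEval (α x) (β y) ≠ 0} := sum_le_sum_of_subset (subset_univ S)
    _ = #{q : ι × κ | P.evalEval (α q.1) (β q.2) ≠ 0} := by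
      simp only [card_filter, Fintype.sum_prod_type]

end Polynomial

section BivariateCode

variable {F : Type*} [Field F] {m : ℕ} (D : Fin m → ℕ)

noncomputable def toBivariate : (Π b, degreeLT F (D b)) →ₗ[F] F[X][X] where
  toFun g := ∑ b : Fin m, monomial (b : ℕ) (g b : F[X])
  map_add' g h := by simp [sum_add_distrib]
  map_smul' c g := by
    simp only [Pi.smul_apply, Submodule.coe_smul, RingHom.id_apply, smul_sum]
    refine sum_congr rfl fun b _ => ?_
    rw [smul_monomial]

theorem coeff_toBivariate (g : Π b, degreeLT F (D b)) (n : ℕ) :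
    (toBivariate D g).coeff n = if h : n < m then (g ⟨n, h⟩ : F[X]) else 0 := by
  simp only [toBivariate, LinearMap.coe_mk, AddHom.coe_mk, finsetSum_coeff, coeff_monomial]
  split_ifs with h
  · rw [sum_eq_single ⟨n, h⟩ (fun b _ hb => if_neg fun hbn => hb (Fin.ext hbn)) (by simp)]
    simp
  · exact sum_eq_zero fun b _ => if_neg fun (hbn : (b : ℕ) = n) => h (hbn ▸ b.isLt)

theorem exists_natDegree_leadingCoeff_toBivariate {g : Π b, degreeLT F (D b)}
    (hg : toBivariate D g ≠ 0) :
    ∃ b : Fin m, (toBivariate D g).natDegree = b ∧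
      (toBivariate D g).leadingCoeff.natDegree < D b := by
  have hlc : (toBivariate D g).coeff (toBivariate D g).natDegree ≠ 0 :=
    mt leadingCoeff_eq_zero.mp hg
  have hlt : (toBivariate D g).natDegree < m := by
    by_contra h
    exact hlc (by rw [coeff_toBivariate, dif_neg h])
  refine ⟨⟨_, hlt⟩, rfl, ?_⟩
  rw [coeff_toBivariate, dif_pos hlt] at hlc
  rw [leadingCoeff, coeff_toBivariate, dif_pos hlt]
  exact (natDegree_lt_iff_degree_lt hlc).mpr (mem_degreeLT.mp (g _).2)

theorem toBivariate_injective : Function.Injective (toBivariate (F := F) D) := by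
  refine (injective_iff_map_eq_zero _).mpr fun g hg => funext fun b => Subtype.ext ?_
  simpa [coeff_toBivariate] using congr_arg (coeff · b) hg

theorem map_C_mul_C_mem_range_toBivariate {p q : F[X]} {t : Fin m} (hp : p.natDegree ≤ t)
    (hq : ∀ b ≤ t, q ∈ degreeLT F (D b)) : p.map C * C q ∈ LinearMap.range (toBivariate D) := by
  have hmem (b : Fin m) : p.coeff b • q ∈ degreeLT F (D b) := by
    by_cases hb : b ≤ t
    · exact Submodule.smul_mem _ _ (hq b hb)
    · rw [coeff_eq_zero_of_natDegree_lt (by omega), zero_smul]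
      exact zero_mem _
  refine ⟨fun b => ⟨_, hmem b⟩, ext fun n => ?_⟩
  rw [coeff_toBivariate, coeff_mul_C, coeff_map, ← smul_eq_C_mul]
  split_ifs with hn
  · rfl
  · rw [coeff_eq_zero_of_natDegree_lt (by omega), zero_smul]

theorem eval_C_toBivariate_mem_degreeLT {r : ℕ} (hD : ∀ b, D b ≤ r) (g : Π b, degreeLT F (D b))
    (y : F) : (toBivariate D g).eval (C y) ∈ degreeLT F r := by
  simp only [toBivariate, LinearMap.coe_mk, AddHom.coe_mk, eval_finsetSum, eval_monomial,
    ← C_pow, ← smul_eq_C_mul, mul_comm _ (C _)]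
  exact Submodule.sum_mem _ fun b _ => Submodule.smul_mem _ _ (degreeLT_mono (hD b) (g b).2)

end BivariateCode

section GridCode

variable {F ι κ : Type*} [Field F] [Fintype ι] [Fintype κ] (α : ι → F) (β : κ → F) {m : ℕ}
  (D : Fin m → ℕ)

-- `evalEval x y` substitutes `y` for the outer variable and `x` for the inner one.
noncomputable def gridEval : F[X][X] →ₗ[F] (ι × κ → F) where
  toFun P q := P.evalEval (α q.1) (β q.2)
  map_add' P Q := by ext; simp [evalEval_add]
  map_smul' c P := by ext; simp [evalEval_smul]

noncomputable def bivariateCode : Submodule F (ι × κ → F) :=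
  LinearMap.range (gridEval α β ∘ₗ toBivariate D)

variable {α β} [DecidableEq F]

theorem exists_le_hammingNorm_gridEval_toBivariate (hα : Function.Injective α)
    (hβ : Function.Injective β) {g : Π b, degreeLT F (D b)} (hg : g ≠ 0) :
    ∃ b : Fin m, (Fintype.card ι + 1 - D b) * (Fintype.card κ - b) ≤
      hammingNorm (gridEval α β (toBivariate D g)) := by
  have hP : toBivariate D g ≠ 0 := (map_ne_zero_iff _ (toBivariate_injective D)).mpr hg
  obtain ⟨b, hdeg, hlc⟩ := exists_natDegree_leadingCoeff_toBivariate D hP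
  refine ⟨b, le_trans ?_ (card_mul_le_card_evalEval_ne_zero hα hβ hP)⟩
  rw [hdeg]
  exact Nat.mul_le_mul_right _ (by omega)

theorem gridEval_toBivariate_injective (hα : Function.Injective α) (hβ : Function.Injective β)
    (hD : ∀ b, D b ≤ Fintype.card ι) (hm : m ≤ Fintype.card κ) :
    Function.Injective (gridEval α β ∘ₗ toBivariate D) := by
  refine (injective_iff_map_eq_zero _).mpr fun g hg => ?_
  by_contra hne
  obtain ⟨b, hb⟩ := exists_le_hammingNorm_gridEval_toBivariate D hα hβ hne
  rw [LinearMap.comp_apply] at hg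
  rw [hg, hammingNorm_zero, Nat.le_zero, mul_eq_zero] at hb
  have := hD b
  have := b.isLt
  omega

theorem finrank_bivariateCode (hα : Function.Injective α) (hβ : Function.Injective β)
    (hD : ∀ b, D b ≤ Fintype.card ι) (hm : m ≤ Fintype.card κ) :
    Module.finrank F (bivariateCode α β D) = ∑ b, D b := by
  rw [bivariateCode, LinearMap.finrank_range_of_inj (gridEval_toBivariate_injective D hα hβ hD hm),
    Module.finrank_pi_fintype]
  simp [(degreeLTEquiv F _).finrank_eq]

theorem hammingNorm_gridEval_prod_X_sub_C (hα : Function.Injective α)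
    (hβ : Function.Injective β) (U : Finset ι) (V : Finset κ) :
    hammingNorm (gridEval α β ((∏ v ∈ V, (X - C (β v))).map C * C (∏ u ∈ U, (X - C (α u))))) =
      (Fintype.card ι - #U) * (Fintype.card κ - #V) := by
  classical
  have hsupp : ({q | gridEval α β ((∏ v ∈ V, (X - C (β v))).map C * C (∏ u ∈ U, (X - C (α u))))
      q ≠ 0} : Finset (ι × κ)) = Uᶜ ×ˢ Vᶜ := by
    ext q
    simp only [gridEval, LinearMap.coe_mk, AddHom.coe_mk, evalEval_mul, evalEval_map_C,
      evalEval_C, mem_filter, mem_univ, true_and, mul_ne_zero_iff,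
      eval_prod_X_sub_C_ne_zero_iff hα, eval_prod_X_sub_C_ne_zero_iff hβ, mem_product,
      mem_compl, and_comm]
  rw [hammingNorm, hsupp, card_product, card_compl, card_compl]

theorem exists_mem_bivariateCode_hammingNorm_eq (hα : Function.Injective α)
    (hβ : Function.Injective β) (hm : m ≤ Fintype.card κ) {s : ℕ} (hsι : s ≤ Fintype.card ι)
    (t : Fin m) (hs : ∀ b ≤ t, s < D b) :
    ∃ c ∈ bivariateCode α β D, hammingNorm c = (Fintype.card ι - s) * (Fintype.card κ - t) := by
  obtain ⟨U, -, hU⟩ := exists_subset_card_eq (s := (univ : Finset ι)) (n := s)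
    (by rwa [card_univ])
  obtain ⟨V, -, hV⟩ := exists_subset_card_eq (s := (univ : Finset κ)) (n := t)
    (by rw [card_univ]; omega)
  have hdeg : (∏ u ∈ U, (X - C (α u)) : F[X]).degree = s := by
    rw [degree_eq_natDegree (monic_prod_of_monic _ _ fun u _ => monic_X_sub_C _).ne_zero,
      natDegree_finsetProd_X_sub_C_eq_card, hU]
  obtain ⟨g, hg⟩ := map_C_mul_C_mem_range_toBivariate D (p := ∏ v ∈ V, (X - C (β v))) (t := t)
    (by rw [natDegree_finsetProd_X_sub_C_eq_card, hV])
    fun b hb => mem_degreeLT.mpr (by rw [hdeg]; exact_mod_cast hs b hb)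
  refine ⟨_, ⟨g, rfl⟩, ?_⟩
  rw [LinearMap.comp_apply, hg, hammingNorm_gridEval_prod_X_sub_C hα hβ, hU, hV]

theorem hasMinDist_bivariateCode (hα : Function.Injective α) (hβ : Function.Injective β)
    (hm : m ≤ Fintype.card κ) {d s : ℕ}
    (hd_le : ∀ b, d ≤ (Fintype.card ι + 1 - D b) * (Fintype.card κ - b)) (t : Fin m)
    (hs : ∀ b ≤ t, s < D b) (hsι : s < Fintype.card ι)
    (hd : d = (Fintype.card ι - s) * (Fintype.card κ - t)) :
    HasMinDist (bivariateCode α β D) d := by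
  refine ⟨?_, ?_⟩
  · rintro _ ⟨g, rfl⟩ hc
    obtain ⟨b, hb⟩ := exists_le_hammingNorm_gridEval_toBivariate D hα hβ
      (g := g) (by rintro rfl; exact hc (map_zero _))
    exact (hd_le b).trans hb
  · obtain ⟨c, hc, hcd⟩ := exists_mem_bivariateCode_hammingNorm_eq D hα hβ hm hsι.le t hs
    refine ⟨c, hc, ?_, hcd.trans hd.symm⟩
    rintro rfl
    rw [hammingNorm_zero] at hcd
    exact Nat.mul_ne_zero (by omega) (by omega) hcd.symm

theorem isLRC_bivariateCode [DecidableEq ι] [DecidableEq κ] (hα : Function.Injective α) {i : ℕ}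
    (hD : ∀ b, D b ≤ i + 1) (hi : i < Fintype.card ι) :
    IsLRC (bivariateCode α β D) (i + 1) (Fintype.card ι - i) := by
  rintro ⟨x₀, y₀⟩
  refine ⟨univ.map (Function.Embedding.sectL ι y₀), by simp, by simp; omega, ?_⟩
  rintro _ ⟨g, rfl⟩ ⟨q, hq, hne⟩
  set p := (toBivariate D g).eval (C (β y₀))
  have hcol (x : ι) : gridEval α β (toBivariate D g) (x, y₀) = p.eval (α x) := rfl
  obtain ⟨x, -, rfl⟩ := mem_map.mp hq
  have hp : p ≠ 0 := by
    rintro hp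
    exact hne (by rw [Function.Embedding.sectL_apply, LinearMap.comp_apply, hcol, hp, eval_zero])
  have hdeg : p.natDegree ≤ i := by
    have := mem_degreeLT.mp (eval_C_toBivariate_mem_degreeLT D hD g (β y₀))
    rw [degree_eq_natDegree hp, Nat.cast_lt] at this
    omega
  rw [filter_map, card_map]
  simpa [Function.comp_def, hcol] using
    (Nat.sub_le_sub_left hdeg _).trans (card_sub_natDegree_le_card_eval_ne_zero hα hp)

end GridCode

section Reindex

variable {F ι κ : Type*} [Field F] [DecidableEq F] [Fintype ι] [Fintype κ]

theorem hammingNorm_funCongrLeft (e : ι ≃ κ) (c : κ → F) :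
    hammingNorm (LinearEquiv.funCongrLeft F F e c) = hammingNorm c := by
  show #{i | c (e i) ≠ 0} = #{j | c j ≠ 0}
  rw [← map_univ_equiv e, filter_map, card_map]
  rfl

theorem HasMinDist.map_funCongrLeft {C : Submodule F (κ → F)} {d : ℕ} (h : HasMinDist C d)
    (e : ι ≃ κ) : HasMinDist (C.map (LinearEquiv.funCongrLeft F F e).toLinearMap) d := by
  obtain ⟨hle, c, hc, hne, hcd⟩ := h
  refine ⟨?_, _, Submodule.mem_map_of_mem hc, ?_, ?_⟩
  · rintro _ ⟨c, hc, rfl⟩ hne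
    rw [LinearEquiv.coe_coe, hammingNorm_funCongrLeft]
    exact hle c hc (by rintro rfl; exact hne (map_zero _))
  · exact (LinearEquiv.map_ne_zero_iff _).mpr hne
  · rw [LinearEquiv.coe_coe, hammingNorm_funCongrLeft, hcd]

theorem IsLRC.map_funCongrLeft [DecidableEq ι] [DecidableEq κ] {C : Submodule F (κ → F)}
    {r δ : ℕ} (h : IsLRC C r δ) (e : ι ≃ κ) :
    IsLRC (C.map (LinearEquiv.funCongrLeft F F e).toLinearMap) r δ := by
  intro i
  obtain ⟨R, hiR, hcard, hrec⟩ := h (e i)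
  refine ⟨R.map e.symm.toEmbedding, by simpa, by simpa, ?_⟩
  rintro _ ⟨c, hc, rfl⟩ ⟨j, hj, hcj⟩
  rw [filter_map, card_map]
  simpa [Function.comp_def] using hrec c hc ⟨e j, by simpa using hj, hcj⟩

theorem isOptimalLRCParams_of_equiv {n k d r δ : ℕ} [DecidableEq κ] (e : Fin n ≃ κ)
    {C : Submodule F (κ → F)} (hk : Module.finrank F C = k) (hd : HasMinDist C d)
    (hl : IsLRC C r δ) (hopt : k + d + ((k + r - 1) / r - 1) * (δ - 1) = n + 1) :
    IsOptimalLRCParams F n k d r δ :=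
  ⟨C.map (LinearEquiv.funCongrLeft F F e).toLinearMap, by rwa [LinearEquiv.finrank_map_eq],
    hd.map_funCongrLeft e, hl.map_funCongrLeft e, hopt⟩

end Reindex

theorem staircase_singleton_bound {n1 n2 i s t : ℕ} (hsi : s ≤ i) (hi : i < n1) (ht : t < n2)
    (hst : s = 0 ∨ t + 1 = n2) :
    (i + 1) * t + s + 1 + (n1 - s) * (n2 - t) +
      (((i + 1) * t + s + 1 + (i + 1) - 1) / (i + 1) - 1) * (n1 - i - 1) = n1 * n2 + 1 := by
  have hceil : ((i + 1) * t + s + 1 + (i + 1) - 1) / (i + 1) = t + 1 := by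
    rw [show (i + 1) * t + s + 1 + (i + 1) - 1 = s + (t + 1) * (i + 1) by ring_nf; omega,
      Nat.add_mul_div_right _ _ (by omega), Nat.div_eq_of_lt (by omega), zero_add]
  obtain ⟨a, rfl⟩ := Nat.exists_eq_add_of_le hsi
  obtain ⟨b, rfl⟩ := Nat.exists_eq_add_of_lt hi
  obtain ⟨c, rfl⟩ := Nat.exists_eq_add_of_lt ht
  rw [hceil]
  simp only [Nat.add_sub_cancel, show s + a + b + 1 - s = a + b + 1 by omega,
    show s + a + b + 1 - (s + a) - 1 = b by omega, show t + c + 1 - t = c + 1 by omega]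
  rcases hst with rfl | h
  · ring
  · obtain rfl : c = 0 := by omega
    ring

theorem isOptimalLRCParams_staircase {F : Type*} [Field F] [Fintype F] [DecidableEq F]
    {n1 n2 i s t k d : ℕ} (hn1 : n1 ≤ Fintype.card F) (hn2 : n2 ≤ Fintype.card F)
    (hsi : s ≤ i) (hi : i < n1) (ht : t < n2) (hst : s = 0 ∨ t + 1 = n2)
    (hdist : (n1 - s) * (n2 - t) ≤ (n1 - i) * (n2 - t + 1))
    (hk : k = (i + 1) * t + s + 1) (hd : d = (n1 - s) * (n2 - t)) :
    IsOptimalLRCParams F (n1 * n2) k d (i + 1) (n1 - i) := by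
  obtain ⟨α⟩ : Nonempty (Fin n1 ↪ F) :=
    Function.Embedding.nonempty_of_card_le (by simpa using hn1)
  obtain ⟨β⟩ : Nonempty (Fin n2 ↪ F) :=
    Function.Embedding.nonempty_of_card_le (by simpa using hn2)
  -- the monomials `X ^ a * Y ^ b` with `a ≤ i` for `b < t` and `a ≤ s` for `b = t`
  set D : Fin (t + 1) → ℕ := fun b => if (b : ℕ) < t then i + 1 else s + 1 with hD_def
  have hD (b) : D b ≤ i + 1 := by simp only [hD_def]; split_ifs <;> omega
  have hdim : Module.finrank F (bivariateCode α β D) = k := by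
    rw [finrank_bivariateCode D α.injective β.injective
        (fun b => by rw [Fintype.card_fin]; exact (hD b).trans hi) (by simpa),
      Fin.sum_univ_castSucc, hk]
    simp [hD_def, mul_comm, add_assoc]
  have hdist_le (b : Fin (t + 1)) :
      d ≤ (Fintype.card (Fin n1) + 1 - D b) * (Fintype.card (Fin n2) - b) := by
    simp only [Fintype.card_fin, hD_def, hd]
    split_ifs with hb
    · exact hdist.trans (by rw [Nat.add_sub_add_right]; exact Nat.mul_le_mul_left _ (by omega))
    · rw [show (b : ℕ) = t by omega, Nat.add_sub_add_right]
  have hmin : HasMinDist (bivariateCode α β D) d :=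
    hasMinDist_bivariateCode D α.injective β.injective (by simpa) hdist_le (s := s) (Fin.last t)
      (fun b _ => by simp only [hD_def]; split_ifs <;> omega) (by simp; omega) (by simpa using hd)
  have hlrc := isLRC_bivariateCode D (β := β) α.injective hD (by simpa)
  rw [Fintype.card_fin] at hlrc
  subst hk hd
  exact isOptimalLRCParams_of_equiv finProdFinEquiv.symm hdim hmin hlrc
    (staircase_singleton_bound hsi hi ht hst)

/-- Over a finite field `F_q`, for all integers `2 ≤ n₁, n₂ ≤ q` there exist
optimal `(r, δ)`-LRCs of length `n₁n₂` with the three listed families of parameters. -/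
theorem optimal_bivariate_params
    {F : Type*} [Field F] [Fintype F] [DecidableEq F]
    (n1 n2 : ℕ) (hn1 : 2 ≤ n1) (hn1q : n1 ≤ Fintype.card F)
    (hn2 : 2 ≤ n2) (hn2q : n2 ≤ Fintype.card F) :
    (∀ j : ℕ, j ≤ n2 - 1 →
      IsOptimalLRCParams F (n1 * n2) (j + 1) (n1 * (n2 - j)) 1 n1) ∧
    (∀ i : ℕ, 1 ≤ i → i ≤ n1 - 2 →
      IsOptimalLRCParams F (n1 * n2) ((i + 1) * n2) (n1 - i) (i + 1) (n1 - i)) ∧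
    (∀ i s : ℕ, 2 * i - n1 ≤ s → s < i → i ≤ n1 - 2 →
      IsOptimalLRCParams F (n1 * n2) ((i + 1) * (n2 - 1) + s + 1) (n1 - s)
        (i + 1) (n1 - i)) ∧
    (∀ i j : ℕ, 1 ≤ i → i ≤ n1 - 2 → 1 ≤ j → j ≤ n2 - 2 → i * (n2 - j + 1) ≤ n1 →
      IsOptimalLRCParams F (n1 * n2) ((i + 1) * j + 1) (n1 * (n2 - j)) (i + 1) (n1 - i)) := by
  have hlast : n2 - (n2 - 1) = 1 := by omega
  refine ⟨fun j hj => ?_, fun i hi1 hi2 => ?_, fun i s hs1 hs2 hi2 => ?_,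
    fun i j hi1 hi2 hj1 hj2 hij => ?_⟩
  · simpa using isOptimalLRCParams_staircase (F := F) (i := 0) (s := 0) (t := j) hn1q hn2q
      le_rfl (by omega) (by omega) (.inl rfl) (Nat.mul_le_mul_left _ (by omega)) rfl rfl
  · exact isOptimalLRCParams_staircase (s := i) (t := n2 - 1) hn1q hn2q le_rfl (by omega)
      (by omega) (.inr (by omega)) (by rw [hlast]; omega) (by zify [show 1 ≤ n2 by omega]; ring)
      (by rw [hlast, mul_one])
  · exact isOptimalLRCParams_staircase (t := n2 - 1) hn1q hn2q hs2.le (by omega) (by omega)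
      (.inr (by omega)) (by rw [hlast]; omega) rfl (by rw [hlast, mul_one])
  · refine isOptimalLRCParams_staircase (s := 0) (t := j) hn1q hn2q (Nat.zero_le i) (by omega)
      (by omega) (.inl rfl) ?_ rfl rfl
    rw [Nat.sub_zero, Nat.sub_mul, Nat.mul_succ]
    omega
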